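/- Let m ∈ ℕ and let c_n ∈ ℂ (n ≥ m) satisfy 0 < |c_m| and |c_n| ≤ |c_{n+1}| for all n ≥ m; let T denote the operator T f(z) := ∑_{n≥m} c_n a_n z^{n−m} for f(z) = ∑_{n≥m} a_n zⁿ. Let r ≥ 0 be such that for every F(z) = ∑_{n≥m} F_n zⁿ for which T F := ∑_{n≥m} c_n F_n z^{n−m} converges on 𝔻 and satisfies sup_{z∈𝔻} |T F(z)| ≤ 1, one has ∑_{n≥m} |F_n| ρⁿ ≤ 1 for all ρ ∈ [0, r]. Suppose f(z) = ∑_{n≥m} a_n zⁿ and g(z) = ∑_{n≥m} b_n zⁿ are such that T f and T g are analytic on 𝔻 and |T f(z)| ≤ |T g(z)| for all z ∈ 𝔻. Then ∑_{n≥m} |a_n| rⁿ ≤ ∑_{n≥m} |c_n b_n| r^{n−m}, i.e. M_r f ≤ M_r(T g). -/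

import Mathlib

/-!
Since `‖Tf‖ ≤ ‖Tg‖` on the disc, the quotient `Tf / Tg` has only removable singularities, so
`Tf = ω * Tg` with `ω` holomorphic and `‖ω‖ ≤ 1`. Writing `ω = ∑ wₖ zᵏ`, the sequence `F` with
`c (k + m) * F (k + m) = wₖ` has `T F = ω`, so the hypothesis on `r` gives
`∑ ‖wₖ / c (k + m)‖ r^(k + m) ≤ 1`. Comparing coefficients in `Tf = ω * Tg` gives
`c (k + m) a (k + m) = ∑_{i + j = k} wᵢ c (j + m) b (j + m)`; as `‖c (i + m)‖ ≤ ‖c (k + m)‖`,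
each `‖a (k + m)‖ r^(k + m)` is bounded by the `k`-th Cauchy-product coefficient of the two
majorant series `∑ ‖wᵢ / c (i + m)‖ r^(i + m)` and `∑ ‖c (j + m) b (j + m)‖ r^j`, and summing
over `k` bounds `M_r f` by `1 · M_r (T g)`.
-/

open Metric Filter Set Topology NNReal ENNReal Finset

section PowerSeriesOnBall

variable {s t : ℕ → ℂ} {T : ℂ → ℂ} {R : ℝ≥0}

theorem hasFPowerSeriesOnBall_ofScalars_of_hasSum (hR : 0 < R)
    (hT : ∀ z ∈ ball (0 : ℂ) R, HasSum (fun n => s n * z ^ n) (T z)) :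
    HasFPowerSeriesOnBall T (FormalMultilinearSeries.ofScalars ℂ s) 0 R where
  r_le := by
    refine ENNReal.le_of_forall_nnreal_lt fun ρ hρ => ?_
    have hρ_mem : ((ρ : ℝ) : ℂ) ∈ ball (0 : ℂ) R := by
      simpa [abs_of_nonneg ρ.coe_nonneg] using hρ
    obtain ⟨C, hC⟩ := ((hT _ hρ_mem).summable.tendsto_atTop_zero.norm).bddAbove_range
    refine FormalMultilinearSeries.le_radius_of_bound _ C fun n => ?_
    simpa [FormalMultilinearSeries.ofScalars_norm, abs_of_nonneg ρ.coe_nonneg] using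
      hC ⟨n, rfl⟩
  r_pos := by exact_mod_cast hR
  hasSum {z} hz := by
    rw [Metric.eball_coe] at hz
    simpa [FormalMultilinearSeries.ofScalars_apply_eq, mul_comm] using hT z hz

theorem summable_norm_mul_pow_of_hasSum (hR : 0 < R)
    (hT : ∀ z ∈ ball (0 : ℂ) R, HasSum (fun n => s n * z ^ n) (T z)) {z : ℂ}
    (hz : z ∈ ball (0 : ℂ) R) : Summable fun n => ‖s n * z ^ n‖ := by
  have hz' : z ∈ eball (0 : ℂ) (FormalMultilinearSeries.ofScalars ℂ s).radius :=
    eball_subset_eball (hasFPowerSeriesOnBall_ofScalars_of_hasSum hR hT).r_le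
      (by rwa [Metric.eball_coe])
  simpa [FormalMultilinearSeries.ofScalars_apply_eq, mul_comm] using
    (FormalMultilinearSeries.ofScalars ℂ s).summable_norm_apply hz'

theorem differentiableOn_of_hasSum_mul_pow (hR : 0 < R)
    (hT : ∀ z ∈ ball (0 : ℂ) R, HasSum (fun n => s n * z ^ n) (T z)) :
    DifferentiableOn ℂ T (ball 0 R) := by
  simpa [Metric.eball_coe] using
    (hasFPowerSeriesOnBall_ofScalars_of_hasSum hR hT).differentiableOn

theorem eq_of_hasSum_mul_pow (hR : 0 < R)
    (hs : ∀ z ∈ ball (0 : ℂ) R, HasSum (fun n => s n * z ^ n) (T z))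
    (ht : ∀ z ∈ ball (0 : ℂ) R, HasSum (fun n => t n * z ^ n) (T z)) : s = t :=
  FormalMultilinearSeries.ofScalars_series_injective ℂ ℂ <|
    HasFPowerSeriesAt.eq_formalMultilinearSeries
      (hasFPowerSeriesOnBall_ofScalars_of_hasSum hR hs).hasFPowerSeriesAt
      (hasFPowerSeriesOnBall_ofScalars_of_hasSum hR ht).hasFPowerSeriesAt

end PowerSeriesOnBall

theorem DifferentiableOn.hasFPowerSeriesOnBall_of_ball {E : Type*} [NormedAddCommGroup E]
    [NormedSpace ℂ E] [CompleteSpace E] {f : ℂ → E} {c : ℂ} {R : ℝ≥0}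
    (hf : DifferentiableOn ℂ f (ball c R)) (hR : 0 < R) :
    HasFPowerSeriesOnBall f (cauchyPowerSeries f c (R / 2 : ℝ≥0)) c R := by
  have hsmall : ∀ ρ : ℝ≥0, 0 < ρ → ρ < R →
      HasFPowerSeriesOnBall f (cauchyPowerSeries f c (R / 2 : ℝ≥0)) c ρ := fun ρ hρ hρR =>
    ((hf.mono (closedBall_subset_ball (NNReal.half_lt_self hR.ne'))).hasFPowerSeriesOnBall
      (half_pos hR)).exchange_radius
      ((hf.mono (closedBall_subset_ball hρR)).hasFPowerSeriesOnBall hρ)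
  refine ⟨?_, by exact_mod_cast hR, fun {y} hy => ?_⟩
  · refine ENNReal.le_of_forall_pos_nnreal_lt fun ρ hρ hρR => (hsmall ρ hρ ?_).r_le
    exact_mod_cast hρR
  · obtain ⟨ρ, hyρ, hρR⟩ := exists_between (mem_eball_zero_iff.mp hy)
    lift ρ to ℝ≥0 using hρR.ne_top
    exact (hsmall ρ (pos_of_gt (ENNReal.coe_lt_coe.mp hyρ))
      (ENNReal.coe_lt_coe.mp hρR)).hasSum (mem_eball_zero_iff.mpr hyρ)

theorem DifferentiableOn.exists_hasSum_mul_pow {f : ℂ → ℂ} {R : ℝ≥0}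
    (hf : DifferentiableOn ℂ f (ball 0 R)) (hR : 0 < R) :
    ∃ w : ℕ → ℂ, ∀ z ∈ ball (0 : ℂ) R, HasSum (fun n => w n * z ^ n) (f z) := by
  refine ⟨(cauchyPowerSeries f 0 (R / 2 : ℝ≥0)).coeff, fun z hz => ?_⟩
  simpa [FormalMultilinearSeries.apply_eq_pow_smul_coeff, mul_comm] using
    (hf.hasFPowerSeriesOnBall_of_ball hR).hasSum (by rwa [Metric.eball_coe])

theorem HasSum.mul_pow_antidiagonal {𝔸 : Type*} [NormedCommRing 𝔸] [CompleteSpace 𝔸]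
    {u v : ℕ → 𝔸} {z U V : 𝔸}
    (hu : HasSum (fun n => u n * z ^ n) U) (hv : HasSum (fun n => v n * z ^ n) V)
    (hu' : Summable fun n => ‖u n * z ^ n‖) (hv' : Summable fun n => ‖v n * z ^ n‖) :
    HasSum (fun n => (∑ ij ∈ antidiagonal n, u ij.1 * v ij.2) * z ^ n) (U * V) := by
  have h := (summable_norm_sum_mul_antidiagonal_of_summable_norm hu' hv').of_norm.hasSum
  rw [← tsum_mul_tsum_eq_tsum_sum_antidiagonal_of_summable_norm hu' hv', hu.tsum_eq,
    hv.tsum_eq] at h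
  have hterm : ∀ n, (∑ ij ∈ antidiagonal n, u ij.1 * v ij.2) * z ^ n =
      ∑ ij ∈ antidiagonal n, u ij.1 * z ^ ij.1 * (v ij.2 * z ^ ij.2) := fun n => by
    rw [sum_mul]
    refine sum_congr rfl fun ij hij => ?_
    rw [← mem_antidiagonal.mp hij, pow_add]
    ring
  simpa only [hterm] using h

section RemovableDiv

variable {f g : ℂ → ℂ} {U : Set ℂ} {z : ℂ}

noncomputable def removableDiv (f g : ℂ → ℂ) (z : ℂ) : ℂ :=
  if g z = 0 then limUnder (𝓝[≠] z) (f / g) else f z / g z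

theorem removableDiv_of_ne_zero (hz : g z ≠ 0) : removableDiv f g z = f z / g z := if_neg hz

theorem eq_removableDiv_mul (h : g z = 0 → f z = 0) : f z = removableDiv f g z * g z := by
  by_cases hz : g z = 0
  · simp [hz, h hz]
  · rw [removableDiv_of_ne_zero hz, div_mul_cancel₀ _ hz]

theorem differentiableAt_removableDiv (hU : IsOpen U) (hz : z ∈ U)
    (hf : DifferentiableOn ℂ f U) (hg : DifferentiableOn ℂ g U)
    (hfg : ∀ w ∈ U, ‖f w‖ ≤ ‖g w‖) (hg0 : ∀ᶠ w in 𝓝[≠] z, g w ≠ 0) :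
    DifferentiableAt ℂ (removableDiv f g) z := by
  have hdiv : ∀ w ∈ U, g w ≠ 0 → DifferentiableAt ℂ (f / g) w := fun w hw hgw =>
    (hf.differentiableAt (hU.mem_nhds hw)).div (hg.differentiableAt (hU.mem_nhds hw)) hgw
  by_cases hgz : g z = 0
  · obtain ⟨ε, hε, hball⟩ := eventually_nhds_iff_ball.mp <| eventually_nhdsWithin_iff.mp <|
      hg0.and (eventually_nhdsWithin_of_eventually_nhds (hU.eventually_mem hz))
    have hd : DifferentiableOn ℂ (f / g) (ball z ε \ {z}) := fun w ⟨hw, hwz⟩ =>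
      (hdiv w (hball w hw hwz).2 (hball w hw hwz).1).differentiableWithinAt
    have hb : BddAbove (norm ∘ (f / g) '' (ball z ε \ {z})) := by
      refine ⟨1, ?_⟩
      rintro _ ⟨w, ⟨hw, hwz⟩, rfl⟩
      simpa [norm_div] using div_le_one_of_le₀ (hfg w (hball w hw hwz).2) (norm_nonneg _)
    have heq : removableDiv f g =ᶠ[𝓝 z]
        Function.update (f / g) z (limUnder (𝓝[≠] z) (f / g)) := by
      filter_upwards [ball_mem_nhds z hε] with w hw
      rcases eq_or_ne w z with rfl | hwz
      · simp [removableDiv, hgz]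
      · simp [removableDiv_of_ne_zero (hball w hw hwz).1, hwz]
    have hz_nhds : ball z ε ∈ 𝓝 z := ball_mem_nhds z hε
    exact heq.differentiableAt_iff.mpr <|
      (Complex.differentiableOn_update_limUnder_of_bddAbove hz_nhds hd hb).differentiableAt hz_nhds
  · have heq : removableDiv f g =ᶠ[𝓝 z] f / g := by
      filter_upwards [(hg.continuousOn.continuousAt (hU.mem_nhds hz)).eventually_ne hgz]
        with w hw using removableDiv_of_ne_zero hw
    exact heq.differentiableAt_iff.mpr (hdiv z hz hgz)

theorem norm_removableDiv_le_one (hU : IsOpen U) (hz : z ∈ U)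
    (hfg : ∀ w ∈ U, ‖f w‖ ≤ ‖g w‖) (hg0 : ∀ᶠ w in 𝓝[≠] z, g w ≠ 0)
    (hcont : ContinuousAt (removableDiv f g) z) : ‖removableDiv f g z‖ ≤ 1 := by
  refine le_of_tendsto (hcont.tendsto.mono_left (nhdsWithin_le_nhds (s := {z}ᶜ))).norm ?_
  filter_upwards [hg0, eventually_nhdsWithin_of_eventually_nhds (hU.eventually_mem hz)]
    with w hgw hw
  rw [removableDiv_of_ne_zero hgw, norm_div]
  exact div_le_one_of_le₀ (hfg w hw) (norm_nonneg _)

theorem exists_differentiableOn_norm_le_one_eq_mul (hU : IsOpen U) (hUc : IsPreconnected U)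
    (hf : DifferentiableOn ℂ f U) (hg : DifferentiableOn ℂ g U)
    (hfg : ∀ z ∈ U, ‖f z‖ ≤ ‖g z‖) :
    ∃ ω : ℂ → ℂ, DifferentiableOn ℂ ω U ∧ (∀ z ∈ U, ‖ω z‖ ≤ 1) ∧
      ∀ z ∈ U, f z = ω z * g z := by
  have hf0 : ∀ z ∈ U, g z = 0 → f z = 0 := fun z hz hgz =>
    norm_le_zero_iff.mp (by simpa [hgz] using hfg z hz)
  by_cases hg_zero : EqOn g 0 U
  · exact ⟨0, differentiableOn_const 0, by simp, fun z hz => by simp [hf0 z hz (hg_zero hz)]⟩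
  have hg0 : ∀ z ∈ U, ∀ᶠ w in 𝓝[≠] z, g w ≠ 0 := fun z hz => not_frequently.mp fun h =>
    hg_zero ((hg.analyticOnNhd hU).eqOn_zero_of_preconnected_of_frequently_eq_zero hUc hz h)
  have hd : ∀ z ∈ U, DifferentiableAt ℂ (removableDiv f g) z := fun z hz =>
    differentiableAt_removableDiv hU hz hf hg hfg (hg0 z hz)
  exact ⟨removableDiv f g, fun z hz => (hd z hz).differentiableWithinAt,
    fun z hz => norm_removableDiv_le_one hU hz hfg (hg0 z hz) (hd z hz).continuousAt,
    fun z hz => eq_removableDiv_mul (hf0 z hz)⟩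

end RemovableDiv

theorem ENNReal.tsum_mul_tsum_eq_tsum_sum_antidiagonal {A : Type*} [AddCommMonoid A]
    [HasAntidiagonal A] (f g : A → ℝ≥0∞) :
    (∑' n, f n) * ∑' n, g n = ∑' n, ∑ kl ∈ antidiagonal n, f kl.1 * g kl.2 := by
  calc (∑' n, f n) * ∑' n, g n = ∑' p : A × A, f p.1 * g p.2 := by
        rw [ENNReal.tsum_prod', ← ENNReal.tsum_mul_right]
        simp_rw [← ENNReal.tsum_mul_left]
    _ = ∑' x : Σ n, antidiagonal n, f x.2.1.1 * g x.2.1.2 :=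
        (HasAntidiagonal.sigmaAntidiagonalEquivProd.tsum_eq fun p => f p.1 * g p.2).symm
    _ = ∑' n, ∑ kl ∈ antidiagonal n, f kl.1 * g kl.2 := by
        rw [ENNReal.tsum_sigma']
        exact tsum_congr fun n => Finset.tsum_subtype _ fun kl : A × A => f kl.1 * g kl.2

theorem tsum_nat_add_eq_tsum_of_eq_zero {M : Type*} [AddCommMonoid M] [TopologicalSpace M]
    {f : ℕ → M} {m : ℕ} (hf : ∀ n < m, f n = 0) : ∑' k, f (k + m) = ∑' n, f n :=
  (add_left_injective m).tsum_eq fun n hn =>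
    ⟨n - m, Nat.sub_add_cancel (not_lt.mp fun h => hn (hf n h))⟩

section CoefficientMajorant

variable {γ α β w : ℕ → ℂ} {r : ℝ} {m : ℕ}

theorem norm_mul_pow_le_sum_antidiagonal (hr : 0 ≤ r) (hγ : Monotone fun k => ‖γ k‖)
    (hγ0 : 0 < ‖γ 0‖)
    (hconv : ∀ k, γ k * α k = ∑ ij ∈ antidiagonal k, w ij.1 * (γ ij.2 * β ij.2)) (k : ℕ) :
    ‖α k‖ * r ^ (k + m) ≤ ∑ ij ∈ antidiagonal k,
      ‖w ij.1 / γ ij.1‖ * r ^ (ij.1 + m) * (‖γ ij.2 * β ij.2‖ * r ^ ij.2) := by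
  have hγ_pos : ∀ k, 0 < ‖γ k‖ := fun k => hγ0.trans_le (hγ k.zero_le)
  refine le_of_mul_le_mul_left ?_ (hγ_pos k)
  calc ‖γ k‖ * (‖α k‖ * r ^ (k + m)) = ‖γ k * α k‖ * r ^ (k + m) := by
        rw [norm_mul, mul_assoc]
    _ ≤ (∑ ij ∈ antidiagonal k, ‖w ij.1‖ * ‖γ ij.2 * β ij.2‖) * r ^ (k + m) := by
        rw [hconv k]
        gcongr
        exact (norm_sum_le _ _).trans (sum_le_sum fun ij _ => (norm_mul _ _).le)
    _ ≤ ‖γ k‖ * ∑ ij ∈ antidiagonal k,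
          ‖w ij.1 / γ ij.1‖ * r ^ (ij.1 + m) * (‖γ ij.2 * β ij.2‖ * r ^ ij.2) := by
        rw [sum_mul, mul_sum]
        refine sum_le_sum fun ij hij => ?_
        obtain rfl : ij.1 + ij.2 = k := mem_antidiagonal.mp hij
        have hw_eq : ‖w ij.1‖ = ‖γ ij.1‖ * ‖w ij.1 / γ ij.1‖ := by
          rw [norm_div, mul_div_cancel₀ _ (hγ_pos _).ne']
        calc ‖w ij.1‖ * ‖γ ij.2 * β ij.2‖ * r ^ (ij.1 + ij.2 + m)
            = ‖γ ij.1‖ *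
                (‖w ij.1 / γ ij.1‖ * r ^ (ij.1 + m) * (‖γ ij.2 * β ij.2‖ * r ^ ij.2)) := by
              rw [hw_eq, add_right_comm, pow_add]
              ring
          _ ≤ _ := by
              gcongr
              exact hγ (Nat.le_add_right _ _)

theorem tsum_ofReal_le_of_eq_sum_antidiagonal (hr : 0 ≤ r) (hγ : Monotone fun k => ‖γ k‖)
    (hγ0 : 0 < ‖γ 0‖)
    (hconv : ∀ k, γ k * α k = ∑ ij ∈ antidiagonal k, w ij.1 * (γ ij.2 * β ij.2))
    (hw : ∑' k, ENNReal.ofReal (‖w k / γ k‖ * r ^ (k + m)) ≤ 1) :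
    ∑' k, ENNReal.ofReal (‖α k‖ * r ^ (k + m)) ≤ ∑' k, ENNReal.ofReal (‖γ k * β k‖ * r ^ k) :=
  calc ∑' k, ENNReal.ofReal (‖α k‖ * r ^ (k + m))
      ≤ ∑' k, ∑ ij ∈ antidiagonal k, ENNReal.ofReal (‖w ij.1 / γ ij.1‖ * r ^ (ij.1 + m)) *
          ENNReal.ofReal (‖γ ij.2 * β ij.2‖ * r ^ ij.2) := by
        refine ENNReal.tsum_le_tsum fun k => ?_
        refine (ENNReal.ofReal_le_ofReal
          (norm_mul_pow_le_sum_antidiagonal hr hγ hγ0 hconv k)).trans_eq ?_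
        rw [ENNReal.ofReal_sum_of_nonneg fun _ _ => by positivity]
        exact sum_congr rfl fun ij _ => ENNReal.ofReal_mul (by positivity)
    _ = (∑' k, ENNReal.ofReal (‖w k / γ k‖ * r ^ (k + m))) *
          ∑' k, ENNReal.ofReal (‖γ k * β k‖ * r ^ k) :=
        (ENNReal.tsum_mul_tsum_eq_tsum_sum_antidiagonal
          (fun k => ENNReal.ofReal (‖w k / γ k‖ * r ^ (k + m)))
          fun k => ENNReal.ofReal (‖γ k * β k‖ * r ^ k)).symm
    _ ≤ 1 * ∑' k, ENNReal.ofReal (‖γ k * β k‖ * r ^ k) := by gcongr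
    _ = ∑' k, ENNReal.ofReal (‖γ k * β k‖ * r ^ k) := one_mul _

end CoefficientMajorant

theorem majorant_series_comparison_majorization_general
    (m : ℕ) (c : ℕ → ℂ) (hcm : 0 < ‖c m‖)
    (hmono : ∀ n, m ≤ n → ‖c n‖ ≤ ‖c (n + 1)‖)
    (r : ℝ) (hr0 : 0 ≤ r)
    (hbohr : ∀ (F : ℕ → ℂ) (G : ℂ → ℂ),
      (∀ n, n < m → F n = 0) →
      (∀ z ∈ Metric.ball (0 : ℂ) 1,
        HasSum (fun n : ℕ => c (n + m) * F (n + m) * z ^ n) (G z)) →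
      (∀ z ∈ Metric.ball (0 : ℂ) 1, ‖G z‖ ≤ 1) →
      ∀ ρ : ℝ, 0 ≤ ρ → ρ ≤ r →
        ∑' n : ℕ, ENNReal.ofReal (‖F n‖ * ρ ^ n) ≤ 1)
    (a b : ℕ → ℂ) (ha0 : ∀ n, n < m → a n = 0)
    (Tf Tg : ℂ → ℂ)
    (hTf : ∀ z ∈ Metric.ball (0 : ℂ) 1,
      HasSum (fun n : ℕ => c (n + m) * a (n + m) * z ^ n) (Tf z))
    (hTg : ∀ z ∈ Metric.ball (0 : ℂ) 1,
      HasSum (fun n : ℕ => c (n + m) * b (n + m) * z ^ n) (Tg z))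
    (hmaj : ∀ z ∈ Metric.ball (0 : ℂ) 1, ‖Tf z‖ ≤ ‖Tg z‖) :
    ∑' n : ℕ, ENNReal.ofReal (‖a n‖ * r ^ n)
      ≤ ∑' n : ℕ, ENNReal.ofReal (‖c (n + m) * b (n + m)‖ * r ^ n) := by
  have hc_mono : Monotone fun k => ‖c (k + m)‖ := monotone_nat_of_le_succ fun k => by
    simpa only [add_right_comm] using hmono (k + m) (Nat.le_add_left m k)
  have hc_pos : 0 < ‖c (0 + m)‖ := by rwa [zero_add]
  have hc_ne : ∀ k, c (k + m) ≠ 0 := fun k =>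
    norm_pos_iff.mp (hc_pos.trans_le (hc_mono k.zero_le))
  obtain ⟨ω, hω, hω_le, hTf_eq⟩ := exists_differentiableOn_norm_le_one_eq_mul isOpen_ball
    (convex_ball 0 1).isPreconnected (differentiableOn_of_hasSum_mul_pow (R := 1) one_pos hTf)
    (differentiableOn_of_hasSum_mul_pow (R := 1) one_pos hTg) hmaj
  obtain ⟨w, hw⟩ : ∃ w : ℕ → ℂ, ∀ z ∈ ball (0 : ℂ) 1, HasSum (fun n => w n * z ^ n) (ω z) :=
    hω.exists_hasSum_mul_pow (R := 1) one_pos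
  have hconv : ∀ k, c (k + m) * a (k + m) =
      ∑ ij ∈ antidiagonal k, w ij.1 * (c (ij.2 + m) * b (ij.2 + m)) := by
    refine congrFun (eq_of_hasSum_mul_pow (R := 1) one_pos hTf fun z hz => ?_)
    rw [hTf_eq z hz]
    exact (hw z hz).mul_pow_antidiagonal (v := fun n => c (n + m) * b (n + m)) (hTg z hz)
      (summable_norm_mul_pow_of_hasSum (R := 1) one_pos hw hz)
      (summable_norm_mul_pow_of_hasSum (R := 1) one_pos hTg hz)
  have hw_bohr : ∑' k, ENNReal.ofReal (‖w k / c (k + m)‖ * r ^ (k + m)) ≤ 1 := by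
    let F : ℕ → ℂ := fun n => if m ≤ n then w (n - m) / c n else 0
    have hF : ∀ k, F (k + m) = w k / c (k + m) := fun k => by simp [F]
    have hF0 : ∀ n < m, F n = 0 := fun n hn => if_neg hn.not_ge
    have hTF : ∀ z ∈ ball (0 : ℂ) 1, HasSum (fun n => c (n + m) * F (n + m) * z ^ n) (ω z) := by
      simpa only [hF, mul_div_cancel₀ _ (hc_ne _)] using hw
    have hshift := tsum_nat_add_eq_tsum_of_eq_zero
      (f := fun n => ENNReal.ofReal (‖F n‖ * r ^ n)) (m := m) fun n hn => by simp [hF0 n hn]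
    simp only [hF] at hshift
    exact hshift ▸ hbohr F ω hF0 hTF hω_le r hr0 le_rfl
  calc ∑' n, ENNReal.ofReal (‖a n‖ * r ^ n)
      = ∑' k, ENNReal.ofReal (‖a (k + m)‖ * r ^ (k + m)) :=
        (tsum_nat_add_eq_tsum_of_eq_zero fun n hn => by simp [ha0 n hn]).symm
    _ ≤ _ := tsum_ofReal_le_of_eq_sum_antidiagonal hr0 hc_mono hc_pos hconv hw_bohr

theorem majorant_series_comparison_majorization
    (m : ℕ) (c : ℕ → ℂ) (hcm : 0 < ‖c m‖)
    (hmono : ∀ n, m ≤ n → ‖c n‖ ≤ ‖c (n + 1)‖)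
    (r : ℝ) (hr0 : 0 ≤ r)
    (hbohr : ∀ (F : ℕ → ℂ) (G : ℂ → ℂ),
      (∀ n, n < m → F n = 0) →
      (∀ z ∈ Metric.ball (0 : ℂ) 1,
        HasSum (fun n : ℕ => c (n + m) * F (n + m) * z ^ n) (G z)) →
      (∀ z ∈ Metric.ball (0 : ℂ) 1, ‖G z‖ ≤ 1) →
      ∀ ρ : ℝ, 0 ≤ ρ → ρ ≤ r →
        ∑' n : ℕ, ENNReal.ofReal (‖F n‖ * ρ ^ n) ≤ 1)
    (a b : ℕ → ℂ) (ha0 : ∀ n, n < m → a n = 0) (hb0 : ∀ n, n < m → b n = 0)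
    (Tf Tg : ℂ → ℂ)
    (hTf : ∀ z ∈ Metric.ball (0 : ℂ) 1,
      HasSum (fun n : ℕ => c (n + m) * a (n + m) * z ^ n) (Tf z))
    (hTg : ∀ z ∈ Metric.ball (0 : ℂ) 1,
      HasSum (fun n : ℕ => c (n + m) * b (n + m) * z ^ n) (Tg z))
    (hmaj : ∀ z ∈ Metric.ball (0 : ℂ) 1, ‖Tf z‖ ≤ ‖Tg z‖) :
    ∑' n : ℕ, ENNReal.ofReal (‖a n‖ * r ^ n)
      ≤ ∑' n : ℕ, ENNReal.ofReal (‖c (n + m) * b (n + m)‖ * r ^ n) :=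
  majorant_series_comparison_majorization_general m c hcm hmono r hr0 hbohr a b ha0 Tf Tg hTf hTg
    hmaj
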